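/- Consider the system ẋ = x(1-dx+cz), ẏ = y(-2+dx+ey-kz), ż = z(1+gx+kz) (Case 12 of (1:-2:1)-resonance: a=-d, b=0, f=-k, h=0, with cd-2dk-gk=0). Then ℓ₁ = 1-dx-(e/2)y+kz satisfies X(ℓ₁) = (-dx+ey+kz)ℓ₁ and ℓ₂ = 1-(e/2)y-(ed/2)xy+(ke/2)yz satisfies X(ℓ₂) = ey·ℓ₂, and the substitution Y = y·ℓ₁·ℓ₂^{-2} satisfies Ẏ = -2Y. -/

import Mathlib

/-! The vector field acts as a derivation, so cofactors of Darboux functions add up: the coordinate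
`y` has cofactor `-2+dx+ey-kz`, hence `y ℓ₁ ℓ₂⁻²` has cofactor
`(-2+dx+ey-kz) + (-dx+ey+kz) - 2ey = -2`. -/

def PartialDifferentiableAt (f : ℝ → ℝ → ℝ → ℝ) (x y z : ℝ) : Prop :=
  DifferentiableAt ℝ (fun t => f t y z) x ∧ DifferentiableAt ℝ (fun t => f x t z) y ∧
    DifferentiableAt ℝ (fun t => f x y t) z

namespace PartialDifferentiableAt

variable {f g : ℝ → ℝ → ℝ → ℝ} {x y z : ℝ}

theorem coord₂ : PartialDifferentiableAt (fun _ y _ => y) x y z :=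
  ⟨differentiableAt_const y, differentiableAt_id, differentiableAt_const y⟩

theorem mul (hf : PartialDifferentiableAt f x y z) (hg : PartialDifferentiableAt g x y z) :
    PartialDifferentiableAt (fun x y z => f x y z * g x y z) x y z :=
  ⟨hf.1.mul hg.1, hf.2.1.mul hg.2.1, hf.2.2.mul hg.2.2⟩

theorem pow (hf : PartialDifferentiableAt f x y z) (n : ℕ) :
    PartialDifferentiableAt (fun x y z => f x y z ^ n) x y z :=
  ⟨hf.1.pow n, hf.2.1.pow n, hf.2.2.pow n⟩

end PartialDifferentiableAt

section LieDerivative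

variable (P Q R : ℝ → ℝ → ℝ → ℝ)

noncomputable def lieDeriv (f : ℝ → ℝ → ℝ → ℝ) (x y z : ℝ) : ℝ :=
  P x y z * deriv (fun t => f t y z) x + Q x y z * deriv (fun t => f x t z) y
    + R x y z * deriv (fun t => f x y t) z

variable {P Q R} {f g : ℝ → ℝ → ℝ → ℝ} {x y z : ℝ}

theorem lieDeriv_coord₂ : lieDeriv P Q R (fun _ y _ => y) x y z = Q x y z := by
  simp [lieDeriv]

theorem lieDeriv_mul (hf : PartialDifferentiableAt f x y z) (hg : PartialDifferentiableAt g x y z) :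
    lieDeriv P Q R (fun x y z => f x y z * g x y z) x y z =
      lieDeriv P Q R f x y z * g x y z + f x y z * lieDeriv P Q R g x y z := by
  simp only [lieDeriv, deriv_fun_mul hf.1 hg.1, deriv_fun_mul hf.2.1 hg.2.1,
    deriv_fun_mul hf.2.2 hg.2.2]
  ring

theorem lieDeriv_pow (hf : PartialDifferentiableAt f x y z) (n : ℕ) :
    lieDeriv P Q R (fun x y z => f x y z ^ n) x y z =
      n * f x y z ^ (n - 1) * lieDeriv P Q R f x y z := by
  simp only [lieDeriv, deriv_fun_pow hf.1, deriv_fun_pow hf.2.1, deriv_fun_pow hf.2.2]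
  ring

theorem lieDeriv_div (hf : PartialDifferentiableAt f x y z) (hg : PartialDifferentiableAt g x y z)
    (hg₀ : g x y z ≠ 0) :
    lieDeriv P Q R (fun x y z => f x y z / g x y z) x y z =
      (lieDeriv P Q R f x y z * g x y z - f x y z * lieDeriv P Q R g x y z) / g x y z ^ 2 := by
  simp only [lieDeriv, deriv_fun_div hf.1 hg.1 hg₀, deriv_fun_div hf.2.1 hg.2.1 hg₀,
    deriv_fun_div hf.2.2 hg.2.2 hg₀]
  ring

theorem lieDeriv_mul_div_pow_of_cofactors {h : ℝ → ℝ → ℝ → ℝ} {a b m : ℝ}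
    (hf : PartialDifferentiableAt f x y z) (hg : PartialDifferentiableAt g x y z)
    (hh : PartialDifferentiableAt h x y z) (hh₀ : h x y z ≠ 0) (n : ℕ)
    (hXf : lieDeriv P Q R f x y z = a * f x y z)
    (hXg : lieDeriv P Q R g x y z = b * g x y z)
    (hXh : lieDeriv P Q R h x y z = m * h x y z) :
    lieDeriv P Q R (fun x y z => f x y z * g x y z / h x y z ^ n) x y z =
      (a + b - n * m) * (f x y z * g x y z / h x y z ^ n) := by
  have hhn : h x y z ^ n ≠ 0 := pow_ne_zero n hh₀
  rw [lieDeriv_div (hf.mul hg) (hh.pow n) hhn, lieDeriv_mul hf hg, lieDeriv_pow hh, hXf, hXg, hXh]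
  rcases n with _ | n
  · simp only [pow_zero, div_one, CharP.cast_eq_zero]
    ring
  · rw [Nat.add_sub_cancel, pow_succ]
    field_simp

end LieDerivative

section Case12

variable (c d e g k : ℝ)

def xDot (x _ z : ℝ) : ℝ := x * (1 - d*x + c*z)
def yDot (x y z : ℝ) : ℝ := y * (-2 + d*x + e*y - k*z)
def zDot (x _ z : ℝ) : ℝ := z * (1 + g*x + k*z)

noncomputable def ell₁ (x y z : ℝ) : ℝ := 1 - d*x - (e/2)*y + k*z
noncomputable def ell₂ (x y z : ℝ) : ℝ := 1 - (e/2)*y - (e*d/2)*x*y + (k*e/2)*y*z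

variable {c d e g k}

theorem partialDifferentiableAt_ell₁ (x y z : ℝ) : PartialDifferentiableAt (ell₁ d e k) x y z := by
  refine ⟨?_, ?_, ?_⟩ <;> unfold ell₁ <;> fun_prop

theorem partialDifferentiableAt_ell₂ (x y z : ℝ) : PartialDifferentiableAt (ell₂ d e k) x y z := by
  refine ⟨?_, ?_, ?_⟩ <;> unfold ell₂ <;> fun_prop

theorem lieDeriv_ell₁ (hcond : c*d - 2*d*k - g*k = 0) (x y z : ℝ) :
    lieDeriv (xDot c d) (yDot d e k) (zDot g k) (ell₁ d e k) x y z =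
      (-(d*x) + e*y + k*z) * ell₁ d e k x y z := by
  simp (disch := fun_prop) only [lieDeriv, xDot, yDot, zDot, ell₁, deriv_fun_add, deriv_fun_sub,
    deriv_fun_mul, deriv_const', deriv_const_mul_id', deriv_div_const]
  linear_combination (-(x*z)) * hcond

theorem lieDeriv_ell₂ (hcond : c*d - 2*d*k - g*k = 0) (x y z : ℝ) :
    lieDeriv (xDot c d) (yDot d e k) (zDot g k) (ell₂ d e k) x y z =
      (e*y) * ell₂ d e k x y z := by
  simp (disch := fun_prop) only [lieDeriv, xDot, yDot, zDot, ell₂, deriv_fun_add, deriv_fun_sub,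
    deriv_fun_mul, deriv_const', deriv_const_mul_id', deriv_div_const]
  linear_combination (-(e/2)*x*y*z) * hcond

end Case12

/-- Case 12 of the `(1:-2:1)`-resonance classification: for the system
`ẋ = x(1-dx+cz)`, `ẏ = y(-2+dx+ey-kz)`, `ż = z(1+gx+kz)` with `cd-2dk-gk = 0`, the
surfaces `ℓ₁ = 1-dx-(e/2)y+kz` and `ℓ₂ = 1-(e/2)y-(ed/2)xy+(ke/2)yz` satisfy
`X(ℓ₁) = (-dx+ey+kz)ℓ₁` and `X(ℓ₂) = ey ℓ₂`, and `Y = y ℓ₁ ℓ₂⁻²` satisfies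
`Ẏ = -2Y` wherever `ℓ₂ ≠ 0`. -/
theorem stmt19 (c d e g k : ℝ) (hcond : c*d - 2*d*k - g*k = 0) :
    ∀ x y z : ℝ,
      ((x*(1 - d*x + c*z)) * deriv (fun t => 1 - d*t - (e/2)*y + k*z) x
        + (y*(-2 + d*x + e*y - k*z)) * deriv (fun t => 1 - d*x - (e/2)*t + k*z) y
        + (z*(1 + g*x + k*z)) * deriv (fun t => 1 - d*x - (e/2)*y + k*t) z
        = (-(d*x) + e*y + k*z) * (1 - d*x - (e/2)*y + k*z))
      ∧
      ((x*(1 - d*x + c*z)) * deriv (fun t => 1 - (e/2)*y - (e*d/2)*t*y + (k*e/2)*y*z) x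
        + (y*(-2 + d*x + e*y - k*z)) *
          deriv (fun t => 1 - (e/2)*t - (e*d/2)*x*t + (k*e/2)*t*z) y
        + (z*(1 + g*x + k*z)) *
          deriv (fun t => 1 - (e/2)*y - (e*d/2)*x*y + (k*e/2)*y*t) z
        = (e*y) * (1 - (e/2)*y - (e*d/2)*x*y + (k*e/2)*y*z))
      ∧
      (1 - (e/2)*y - (e*d/2)*x*y + (k*e/2)*y*z ≠ 0 →
        (x*(1 - d*x + c*z)) *
            deriv (fun t => y * (1 - d*t - (e/2)*y + k*z)
              / (1 - (e/2)*y - (e*d/2)*t*y + (k*e/2)*y*z)^2) x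
          + (y*(-2 + d*x + e*y - k*z)) *
            deriv (fun t => t * (1 - d*x - (e/2)*t + k*z)
              / (1 - (e/2)*t - (e*d/2)*x*t + (k*e/2)*t*z)^2) y
          + (z*(1 + g*x + k*z)) *
            deriv (fun t => y * (1 - d*x - (e/2)*y + k*t)
              / (1 - (e/2)*y - (e*d/2)*x*y + (k*e/2)*y*t)^2) z
          = -2 * (y * (1 - d*x - (e/2)*y + k*z)
              / (1 - (e/2)*y - (e*d/2)*x*y + (k*e/2)*y*z)^2)) := by
  intro x y z
  refine ⟨lieDeriv_ell₁ hcond x y z, lieDeriv_ell₂ hcond x y z, fun hℓ₂ => ?_⟩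
  have hXy : lieDeriv (xDot c d) (yDot d e k) (zDot g k) (fun _ y _ => y) x y z =
      (-2 + d*x + e*y - k*z) * y := by
    rw [lieDeriv_coord₂, yDot, mul_comm]
  refine (lieDeriv_mul_div_pow_of_cofactors .coord₂ (partialDifferentiableAt_ell₁ x y z)
    (partialDifferentiableAt_ell₂ x y z) hℓ₂ 2 hXy (lieDeriv_ell₁ hcond x y z)
    (lieDeriv_ell₂ hcond x y z)).trans ?_
  unfold ell₁ ell₂
  ring
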